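/- arXiv:math/0103083 — 5 statements merged into one kernel-verified Lean document; each statement's English description precedes it below -/
import Mathlib

section
/- For an odd prime p, k ≥ 1, and integers m, n with m + n ≡ 0 (mod p), the core function A(n) = n^(p^(k-1)) satisfies A(m) ≡ -A(n) (mod p^k). -/
theorem ZMod.intCast_pow_eq_of_dvd_sub {p : ℕ} {a b : ℤ} (h : (p : ℤ) ∣ a - b) (k : ℕ) :
    (a : ZMod (p ^ (k + 1))) ^ p ^ k = (b : ZMod (p ^ (k + 1))) ^ p ^ k := by
  rw [← Int.cast_pow, ← Int.cast_pow, ZMod.intCast_eq_intCast_iff_dvd_sub]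
  exact_mod_cast dvd_sub_comm.mp (dvd_sub_pow_of_dvd_sub h k)

theorem stmt_5_general (p k : ℕ) (hodd : Odd p) (hk : 1 ≤ k)
    (m n : ℤ) (h : (p : ℤ) ∣ m + n) :
    ((m : ZMod (p ^ k))) ^ (p ^ (k - 1)) = -((n : ZMod (p ^ k)) ^ (p ^ (k - 1))) := by
  obtain ⟨j, rfl⟩ := Nat.exists_eq_add_of_le' hk
  have hdvd : (p : ℤ) ∣ m - -n := by rwa [sub_neg_eq_add]
  rw [Nat.add_sub_cancel, ZMod.intCast_pow_eq_of_dvd_sub hdvd j, Int.cast_neg, hodd.pow.neg_pow]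

theorem stmt_5 (p k : ℕ) (hp : p.Prime) (hodd : Odd p) (hk : 1 ≤ k)
    (m n : ℤ) (h : (p : ℤ) ∣ m + n) :
    ((m : ZMod (p ^ k))) ^ (p ^ (k - 1)) = -((n : ZMod (p ^ k)) ^ (p ^ (k - 1))) :=
  stmt_5_general p k hodd hk m n h
end

section
/- For an odd prime p, k ≥ 1, and integers m, n with m + n ≡ -1 (mod p), the core increment d(n) = (n+1)^(p^(k-1)) - n^(p^(k-1)) satisfies d(m) ≡ d(n) (mod p^k). -/
/-!
Write `e = p ^ (k - 1)`. Since `m ≡ -(n + 1)` and `m + 1 ≡ -n` modulo `p`, lifting the exponent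
gives `m ^ e ≡ (-(n + 1)) ^ e` and `(m + 1) ^ e ≡ (-n) ^ e` modulo `p ^ k`; as `e` is odd, the signs
come out, and `d(m) ≡ -n ^ e + (n + 1) ^ e = d(n)`.
-/

theorem ZMod.intCast_pow_pow_eq_of_dvd_sub {p : ℕ} {a b : ℤ} (h : (p : ℤ) ∣ a - b) (j : ℕ) :
    (a : ZMod (p ^ (j + 1))) ^ p ^ j = (b : ZMod (p ^ (j + 1))) ^ p ^ j := by
  have hdvd : ((p ^ (j + 1) : ℕ) : ℤ) ∣ b ^ p ^ j - a ^ p ^ j := by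
    rw [dvd_sub_comm]
    exact_mod_cast dvd_sub_pow_of_dvd_sub h j
  exact_mod_cast (ZMod.intCast_eq_intCast_iff_dvd_sub _ _ _).mpr hdvd

theorem stmt_6_general (p k : ℕ) (hodd : Odd p) (hk : 1 ≤ k)
    (m n : ℤ) (h : (p : ℤ) ∣ m + n + 1) :
    ((m : ZMod (p ^ k)) + 1) ^ (p ^ (k - 1)) - (m : ZMod (p ^ k)) ^ (p ^ (k - 1))
      = ((n : ZMod (p ^ k)) + 1) ^ (p ^ (k - 1)) - (n : ZMod (p ^ k)) ^ (p ^ (k - 1)) := by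
  obtain ⟨j, rfl⟩ : ∃ j, k = j + 1 := ⟨k - 1, by omega⟩
  rw [Nat.add_sub_cancel]
  have hodd_exp : Odd (p ^ j) := hodd.pow
  have hm : (m : ZMod (p ^ (j + 1))) ^ p ^ j = -((n : ZMod (p ^ (j + 1))) + 1) ^ p ^ j := by
    rw [← hodd_exp.neg_pow]
    exact_mod_cast ZMod.intCast_pow_pow_eq_of_dvd_sub (b := -(n + 1)) (by convert h using 1; ring) j
  have hm_succ : ((m : ZMod (p ^ (j + 1))) + 1) ^ p ^ j = -(n : ZMod (p ^ (j + 1))) ^ p ^ j := by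
    rw [← hodd_exp.neg_pow]
    exact_mod_cast ZMod.intCast_pow_pow_eq_of_dvd_sub (a := m + 1) (b := -n)
      (by convert h using 1; ring) j
  rw [hm, hm_succ]
  ring

theorem stmt_6 (p k : ℕ) (hp : p.Prime) (hodd : Odd p) (hk : 1 ≤ k)
    (m n : ℤ) (h : (p : ℤ) ∣ m + n + 1) :
    ((m : ZMod (p ^ k)) + 1) ^ (p ^ (k - 1)) - (m : ZMod (p ^ k)) ^ (p ^ (k - 1))
      = ((n : ZMod (p ^ k)) + 1) ^ (p ^ (k - 1)) - (n : ZMod (p ^ k)) ^ (p ^ (k - 1)) :=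
  stmt_6_general p k hodd hk m n h
end

section
/- For an odd prime p, an integer n coprime to p with FST-carry n' (i.e., n^(p-1) ≡ n'p+1 mod p^2), and i ≥ 1: n^(p^i) ≡ (n'·p^i + 1) · n^(p^(i-1)) (mod p^(i+1)). -/
/-!
Raising a congruence modulo `p ^ k` (`k ≥ 1`) to the `p`-th power gains one factor of `p`, and for
odd `p` the binomial expansion gives `(1 + n' p ^ j) ^ p ≡ 1 + n' p ^ (j + 1) (mod p ^ (j + 2))`.
Starting from `n ^ p ≡ (n' p + 1) n (mod p ^ 2)`, which is the carry congruence multiplied by `n`,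
the two facts together carry the congruence from `i` to `i + 1`.
-/

theorem pow_succ_dvd_pow_sub_pow_of_pow_dvd_sub {R : Type*} [CommRing R] {p k : ℕ} {a b : R}
    (hk : 1 ≤ k) (h : (p : R) ^ k ∣ a - b) : (p : R) ^ (k + 1) ∣ a ^ p - b ^ p := by
  rw [← geom_sum₂_mul, pow_succ']
  exact mul_dvd_mul (dvd_geom_sum₂_self ((dvd_pow_self _ (by omega)).trans h)) h

theorem pow_three_mul_dvd_add_mul_pow_sub {R : Type*} [CommRing R] {p : ℕ} (hodd : Odd p)
    (a b : R) : (p : R) ^ 3 * b ∣ (a + p * b) ^ p - a ^ p - p ^ 2 * a ^ (p - 1) * b := by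
  obtain ⟨c, hc⟩ := odd_sq_dvd_geom_sum₂_sub a b hodd
  rw [sub_eq_iff_eq_add] at hc
  refine ⟨c, ?_⟩
  rw [← geom_sum₂_mul, hc]
  ring

theorem pow_add_two_dvd_pow_pow_succ_sub {p : ℕ} (hodd : Odd p) {n n' : ℤ}
    (hcarry : (p : ℤ) ^ 2 ∣ n ^ (p - 1) - (n' * p + 1)) (j : ℕ) :
    (p : ℤ) ^ (j + 2) ∣ n ^ (p ^ (j + 1)) - (n' * (p : ℤ) ^ (j + 1) + 1) * n ^ (p ^ j) := by
  induction j with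
  | zero =>
    have hsucc : p - 1 + 1 = p := Nat.sub_add_cancel hodd.pos
    have h : n ^ p - (n' * p + 1) * n = n * (n ^ (p - 1) - (n' * p + 1)) := by
      rw [mul_sub, ← pow_succ', hsucc]
      ring
    simpa [h] using hcarry.mul_left n
  | succ j ih =>
    have hlift := pow_succ_dvd_pow_sub_pow_of_pow_dvd_sub (by omega) ih
    have hbinom := pow_three_mul_dvd_add_mul_pow_sub hodd (1 : ℤ) (n' * (p : ℤ) ^ j)
    have hdvd : (p : ℤ) ^ (j + 1 + 2) ∣ (p : ℤ) ^ 3 * (n' * (p : ℤ) ^ j) * n ^ p ^ (j + 1) :=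
      ⟨n' * n ^ p ^ (j + 1), by ring⟩
    have hsplit : n ^ p ^ (j + 2) - (n' * (p : ℤ) ^ (j + 2) + 1) * n ^ p ^ (j + 1) =
        ((n ^ p ^ (j + 1)) ^ p - ((n' * (p : ℤ) ^ (j + 1) + 1) * n ^ p ^ j) ^ p) +
        ((1 + p * (n' * (p : ℤ) ^ j)) ^ p - 1 ^ p - p ^ 2 * 1 ^ (p - 1) * (n' * (p : ℤ) ^ j)) *
          n ^ p ^ (j + 1) := by
      rw [mul_pow, ← pow_mul, ← pow_mul, ← pow_succ, ← pow_succ]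
      ring
    rw [hsplit]
    exact hlift.add (hdvd.trans (mul_dvd_mul_right hbinom _))

theorem stmt_10_general (p : ℕ) (hodd : Odd p) (n n' : ℤ) (i : ℕ)
    (hi : 1 ≤ i)
    (hcarry : ((p : ℤ)) ^ 2 ∣ n ^ (p - 1) - (n' * p + 1)) :
    ((p : ℤ)) ^ (i + 1) ∣ n ^ (p ^ i) - (n' * (p : ℤ) ^ i + 1) * n ^ (p ^ (i - 1)) := by
  obtain ⟨j, rfl⟩ : ∃ j, i = j + 1 := ⟨i - 1, by omega⟩
  simpa using pow_add_two_dvd_pow_pow_succ_sub hodd hcarry j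

theorem stmt_10 (p : ℕ) (hp : p.Prime) (hodd : Odd p) (n n' : ℤ) (i : ℕ)
    (hn : IsCoprime n (p : ℤ)) (hi : 1 ≤ i)
    (hcarry : ((p : ℤ)) ^ 2 ∣ n ^ (p - 1) - (n' * p + 1)) :
    ((p : ℤ)) ^ (i + 1) ∣ n ^ (p ^ i) - (n' * (p : ℤ) ^ i + 1) * n ^ (p ^ (i - 1)) :=
  stmt_10_general p hodd n n' i hi hcarry
end

section
/- For an odd prime p and k ≥ 2, every residue class that is a nonzero multiple of p modulo p^k (i.e., of the form m·p with m coprime to p) can be written as a sum of three p-th power residues a^p + b^p + c^p with a, b, c coprime to p, modulo p^k. -/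
/-!
Modulo `p ^ 2` it suffices to scale one triple. Some `n` with `n`, `n + 1` prime to `p` has
`p ^ 2 ∤ n ^ p + 1 - (n + 1) ^ p`: otherwise `n ^ p ≡ n [ZMOD p ^ 2]` would propagate from `n = 1`
to `n = p - 1`, whereas `(p - 1) ^ p ≡ -1`. Hence `n ^ p + 1 ^ p + (-(n + 1)) ^ p = p * e` with
`p ∤ e`, and scaling the triple by `t ≡ m / e [ZMOD p]` multiplies the sum by `t ^ p ≡ t`.

The third term is then lifted (Hensel): if `c ^ p ≡ N [ZMOD p ^ j]` with `j ≥ 2` and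
`N - c ^ p = p ^ j * s`, then `(c + p ^ (j - 1) * s) ^ p ≡ c ^ p + p ^ j * s * c ^ (p - 1) ≡ N`
modulo `p ^ (j + 1)`, by the binomial theorem and Fermat.
-/

theorem Int.prime_pow_dvd_add_pow_sub_sub {p : ℕ} (hp : p.Prime) (hodd : Odd p) {i : ℕ}
    (hi : 1 ≤ i) {c t : ℤ} (ht : (p : ℤ) ^ i ∣ t) :
    (p : ℤ) ^ (2 * i + 1) ∣ (c + t) ^ p - c ^ p - p * c ^ (p - 1) * t := by
  obtain ⟨q, rfl⟩ : ∃ q, p = q + 2 := ⟨p - 2, by have := hp.two_le; omega⟩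
  have hq : 1 ≤ q := by rcases hodd with ⟨r, hr⟩; omega
  have hexpand : (c + t) ^ (q + 2) - c ^ (q + 2) - ((q + 2 : ℕ) : ℤ) * c ^ (q + 2 - 1) * t =
      ∑ n ∈ Finset.range (q + 1),
        t ^ (n + 2) * c ^ (q - n) * ((q + 2).choose (n + 2) : ℤ) := by
    rw [add_comm c t, add_pow, Finset.sum_range_succ', Finset.sum_range_succ']
    simp only [Nat.add_sub_add_right, zero_add, Nat.choose_zero_right, Nat.choose_one_right]
    push_cast
    ring
  rw [hexpand]
  refine Finset.dvd_sum fun n hn => ?_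
  rcases Nat.lt_succ_iff_lt_or_eq.mp (Finset.mem_range.mp hn) with hlt | hnq
  · have hchoose : ((q + 2 : ℕ) : ℤ) ∣ ((q + 2).choose (n + 2) : ℤ) :=
      Int.natCast_dvd_natCast.mpr (hp.dvd_choose_self (by omega) (by omega))
    have hpow : ((q + 2 : ℕ) : ℤ) ^ (2 * i) ∣ t ^ (n + 2) :=
      calc ((q + 2 : ℕ) : ℤ) ^ (2 * i) = (((q + 2 : ℕ) : ℤ) ^ i) ^ 2 := by ring
        _ ∣ t ^ 2 := pow_dvd_pow_of_dvd ht 2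
        _ ∣ t ^ (n + 2) := pow_dvd_pow t (by omega)
    rw [pow_succ]
    exact mul_dvd_mul (dvd_mul_of_dvd_left hpow) hchoose
  · calc ((q + 2 : ℕ) : ℤ) ^ (2 * i + 1) ∣ (((q + 2 : ℕ) : ℤ) ^ i) ^ (n + 2) := by
          rw [← pow_mul]; exact pow_dvd_pow _ (by subst hnq; nlinarith)
      _ ∣ t ^ (n + 2) := pow_dvd_pow_of_dvd ht _
      _ ∣ _ := (dvd_mul_right _ _).mul_right _

theorem Int.exists_pow_modEq_prime_pow_succ {p : ℕ} (hp : p.Prime) (hodd : Odd p) {j : ℕ}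
    (hj : 2 ≤ j) {N c : ℤ} (hc : IsCoprime c p) (h : c ^ p ≡ N [ZMOD p ^ j]) :
    ∃ d : ℤ, IsCoprime d p ∧ d ^ p ≡ N [ZMOD p ^ (j + 1)] := by
  obtain ⟨s, hs⟩ := Int.modEq_iff_dvd.mp h
  have hpj : (p : ℤ) * p ^ (j - 1) = p ^ j := by rw [← pow_succ']; congr 1; omega
  refine ⟨c + p ^ (j - 1) * s, ?_, Int.modEq_iff_dvd.mpr ?_⟩
  · obtain ⟨r, hr⟩ : ∃ r, j - 1 = r + 1 := ⟨j - 2, by omega⟩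
    rw [hr, pow_succ', mul_assoc]
    exact hc.add_mul_left_left _
  · have hbinom := Int.prime_pow_dvd_add_pow_sub_sub hp hodd (i := j - 1) (by omega) (c := c)
      (dvd_mul_right _ s)
    have hfermat := Int.prime_dvd_pow_sub_one hp hc
    have hsplit : N - (c + p ^ (j - 1) * s) ^ p =
        -((c + p ^ (j - 1) * s) ^ p - c ^ p - p * c ^ (p - 1) * (p ^ (j - 1) * s)) -
          (c ^ (p - 1) - 1) * p ^ j * s := by
      linear_combination hs - c ^ (p - 1) * s * hpj
    rw [hsplit]
    refine dvd_sub (dvd_neg.mpr ((pow_dvd_pow _ (by omega)).trans hbinom)) ?_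
    rw [pow_succ']
    exact (mul_dvd_mul_right hfermat _).mul_right s

theorem Int.exists_pow_modEq_prime_pow_of_modEq_sq {p : ℕ} (hp : p.Prime) (hodd : Odd p)
    {N c : ℤ} (hc : IsCoprime c p) (h : c ^ p ≡ N [ZMOD p ^ 2]) {k : ℕ} (hk : 2 ≤ k) :
    ∃ d : ℤ, IsCoprime d p ∧ d ^ p ≡ N [ZMOD p ^ k] := by
  induction k, hk using Nat.le_induction with
  | base => exact ⟨c, hc, h⟩
  | succ j hj ih =>
    obtain ⟨d, hd, hdN⟩ := ih
    exact Int.exists_pow_modEq_prime_pow_succ hp hodd hj hd hdN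

theorem Int.exists_add_one_pow_not_modEq_sq {p : ℕ} (hp : p.Prime) (hodd : Odd p) :
    ∃ n : ℤ, IsCoprime n p ∧ IsCoprime (n + 1) p ∧
      ¬ n ^ p + 1 ≡ (n + 1) ^ p [ZMOD p ^ 2] := by
  by_contra! hcon
  have hunit (n : ℕ) (hn : 1 ≤ n) (hnp : n < p) : IsCoprime (n : ℤ) p :=
    Nat.isCoprime_iff_coprime.mpr (Nat.coprime_of_lt_prime (by omega) hnp hp).symm
  have hfix (n : ℕ) (hn : 1 ≤ n) : n < p → (n : ℤ) ^ p ≡ n [ZMOD p ^ 2] := by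
    induction n, hn using Nat.le_induction with
    | base => intro; simp
    | succ n hn ih =>
      intro hnp
      push_cast
      calc ((n : ℤ) + 1) ^ p ≡ n ^ p + 1 [ZMOD p ^ 2] :=
            (hcon n (hunit n hn (by omega)) (by exact_mod_cast hunit (n + 1) (by omega) hnp)).symm
        _ ≡ n + 1 [ZMOD p ^ 2] := (ih (by omega)).add_right 1
  have hfix_last : ((p : ℤ) - 1) ^ p ≡ p - 1 [ZMOD p ^ 2] := by
    have := hp.two_le
    simpa [Nat.cast_sub hp.one_lt.le] using hfix (p - 1) (by omega) (by omega)
  have hbinom_last : ((p : ℤ) - 1) ^ p ≡ -1 [ZMOD p ^ 2] := by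
    have h := sq_dvd_add_pow_sub_sub (p : ℤ) (-1) p
    rw [Odd.neg_one_pow hodd, (Nat.Odd.sub_odd hodd odd_one).neg_one_pow] at h
    refine Int.modEq_iff_dvd.mpr ?_
    rw [show (-1 : ℤ) - (p - 1) ^ p = -((-1 + p) ^ p - 1 * p * p - -1) - p ^ 2 by ring]
    exact (dvd_neg.mpr h).sub dvd_rfl
  have hsq := (hfix_last.symm.trans hbinom_last).dvd
  rw [show (-1 : ℤ) - (p - 1) = -p by ring, dvd_neg] at hsq
  have := Nat.le_of_dvd hp.pos (by exact_mod_cast hsq)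
  nlinarith [hp.two_le]

theorem Int.exists_sum_three_pow_modEq_mul_prime {p : ℕ} (hp : p.Prime) (hodd : Odd p) {m : ℤ}
    (hm : IsCoprime m p) :
    ∃ a b c : ℤ, IsCoprime a p ∧ IsCoprime b p ∧ IsCoprime c p ∧
      a ^ p + b ^ p + c ^ p ≡ m * p [ZMOD p ^ 2] := by
  obtain ⟨n, hn, hn1, hne⟩ := Int.exists_add_one_pow_not_modEq_sq hp hodd
  obtain ⟨e, he⟩ : (p : ℤ) ∣ n ^ p + 1 - (n + 1) ^ p := by
    rw [show n ^ p + 1 - (n + 1) ^ p = (n ^ p - n) - ((n + 1) ^ p - (n + 1)) by ring]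
    exact (Int.prime_dvd_pow_self_sub hp n).sub (Int.prime_dvd_pow_self_sub hp (n + 1))
  have he_coprime : IsCoprime e p := by
    refine ((Nat.prime_iff_prime_int.mp hp).coprime_iff_not_dvd.mpr fun hpe => hne ?_).symm
    refine Int.modEq_iff_dvd.mpr ?_
    obtain ⟨r, rfl⟩ := hpe
    exact ⟨-r, by linear_combination -he⟩
  obtain ⟨u, v, huv⟩ := he_coprime
  have ht : IsCoprime (m * u) p := hm.mul_left ⟨e, v, by linear_combination huv⟩
  refine ⟨m * u * n, m * u, -(m * u * (n + 1)), ht.mul_left hn, ht,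
    (ht.mul_left hn1).neg_left, ?_⟩
  have hsum : (m * u * n) ^ p + (m * u) ^ p + (-(m * u * (n + 1))) ^ p =
      p * (e * (m * u) ^ p) := by
    rw [Odd.neg_pow hodd, mul_pow _ n, mul_pow _ (n + 1)]
    linear_combination (m * u) ^ p * he
  have hinv : e * (m * u) ≡ m [ZMOD p] :=
    Int.modEq_iff_dvd.mpr ⟨m * v, by linear_combination -m * huv⟩
  rw [hsum, sq, mul_comm m (p : ℤ)]
  exact (((Int.ModEq.pow_prime_eq_self hp _).mul_left e).trans hinv).mul_left'

theorem stmt_16 (p k : ℕ) (hp : p.Prime) (hodd : Odd p) (hk : 2 ≤ k)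
    (m : ℤ) (hm : IsCoprime m (p : ℤ)) :
    ∃ a b c : ℤ, IsCoprime a (p : ℤ) ∧ IsCoprime b (p : ℤ) ∧ IsCoprime c (p : ℤ) ∧
      ((m * p : ℤ) : ZMod (p ^ k)) = (a : ZMod (p ^ k)) ^ p + (b : ZMod (p ^ k)) ^ p + (c : ZMod (p ^ k)) ^ p := by
  obtain ⟨a, b, c, ha, hb, hc, habc⟩ := Int.exists_sum_three_pow_modEq_mul_prime hp hodd hm
  have hc_sq : c ^ p ≡ m * p - a ^ p - b ^ p [ZMOD p ^ 2] := by
    have := habc.sub_right (a ^ p + b ^ p)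
    rwa [add_sub_cancel_left, ← sub_sub] at this
  obtain ⟨d, hd, hdk⟩ := Int.exists_pow_modEq_prime_pow_of_modEq_sq hp hodd hc hc_sq hk
  refine ⟨a, b, d, ha, hb, hd, ?_⟩
  have hcast := (ZMod.intCast_eq_intCast_iff _ _ (p ^ k)).mpr (by push_cast; exact hdk)
  push_cast at hcast ⊢
  linear_combination -hcast
end

section
/- For an odd prime p and k ≥ 2, every residue class x in ZMod (p^k) is a sum of at most four p-th power residues: there exist integers a,b,c,d each coprime to p such that x ≡ a^p + b^p + c^p (mod p^k) or x ≡ a^p + b^p + c^p + d^p (mod p^k). -/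
/-!
For odd `p`, `(1 + p ^ (m + 1) * t) ^ p ≡ 1 + p ^ (m + 2) * t` modulo `p ^ (m + 3)`, so a
congruence `b ^ p ≡ y` modulo `p ^ (m + 2)` with `b` prime to `p` can be corrected by a factor
`1 + p ^ (m + 1) * s` to hold modulo `p ^ (m + 3)`: a unit `p`-th power modulo `p ^ 2` stays one
modulo every `p ^ k`, and it suffices to represent `x` modulo `p ^ 2`.

Modulo `p ^ 2`, the telescoping sum of `(n + 1) ^ p - n ^ p - 1` over `n < p - 1` equals
`(p - 1) ^ p - (p - 1) ≡ -p`, so some `1 ≤ n ≤ p - 2` has `(n + 1) ^ p - n ^ p - 1 = p * g` with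
`p ∤ g`. Scaling the triple `n + 1, -n, -1` by `t` multiplies this by `t ^ p ≡ t (mod p)`, which
gives every `p * m` with `p ∤ m` as a sum of three unit `p`-th powers. The general `x` is then
`x ^ p + p * m` or `p * m`, with `1 + (-1) ^ p = 0` filling up the cases `p ∣ m`.
-/

open Finset

variable {p : ℕ}

theorem one_add_prime_pow_mul_pow_modEq (hp : p.Prime) (hodd : Odd p) (m : ℕ) (t : ℤ) :
    (1 + (p : ℤ) ^ (m + 1) * t) ^ p ≡ 1 + (p : ℤ) ^ (m + 2) * t [ZMOD (p : ℤ) ^ (m + 3)] := by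
  have hp3 : 3 ≤ p := by obtain ⟨r, hr⟩ := hodd; have := hp.two_le; omega
  obtain ⟨y, hy⟩ := ZMod.exists_one_add_mul_pow_prime_eq (R := ℤ) (u := (p : ℤ) ^ (m + 1))
    (v := p) hp (dvd_pow_self _ m.succ_ne_zero) (by
      rw [← pow_succ', ← pow_succ, ← pow_mul]
      exact pow_dvd_pow _ (by nlinarith)) t
  rw [hy]
  exact Int.modEq_iff_dvd.mpr ⟨-y, by ring⟩

theorem exists_pow_modEq_of_pow_modEq_sq (hp : p.Prime) (hodd : Odd p) {a y : ℤ}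
    (ha : IsCoprime a p) (hy : a ^ p ≡ y [ZMOD (p : ℤ) ^ 2]) (n : ℕ) :
    ∃ b : ℤ, IsCoprime b p ∧ b ^ p ≡ y [ZMOD (p : ℤ) ^ (n + 2)] := by
  induction n with
  | zero => exact ⟨a, ha, hy⟩
  | succ n ih =>
    obtain ⟨b, hb, hby⟩ := ih
    obtain ⟨t, ht⟩ := hby.dvd
    -- `b ^ (p - 2)` inverts `b ^ p` modulo `p`, by Fermat
    set s := b ^ (p - 2) * t
    have hbs : b ^ p * s = (b ^ (p - 1)) ^ 2 * t := by
      rw [← mul_assoc, ← pow_add, ← pow_mul]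
      congr 2
      have := hp.two_le
      omega
    have hfermat : (p : ℤ) ^ (n + 2) * ((b ^ (p - 1)) ^ 2 * t) ≡ (p : ℤ) ^ (n + 2) * t
        [ZMOD (p : ℤ) ^ (n + 3)] := by
      have := (((Int.ModEq.pow_card_sub_one_eq_one hp hb).pow 2).mul_right t).mul_left'
        (c := (p : ℤ) ^ (n + 2))
      rwa [one_pow, one_mul, ← pow_succ] at this
    refine ⟨b * (1 + (p : ℤ) ^ (n + 1) * s), hb.mul_left ?_, ?_⟩
    · rw [pow_succ', mul_assoc]
      exact isCoprime_one_left.add_mul_left_left _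
    · calc (b * (1 + (p : ℤ) ^ (n + 1) * s)) ^ p = b ^ p * (1 + (p : ℤ) ^ (n + 1) * s) ^ p :=
            mul_pow _ _ _
        _ ≡ b ^ p * (1 + (p : ℤ) ^ (n + 2) * s) [ZMOD (p : ℤ) ^ (n + 3)] :=
            (one_add_prime_pow_mul_pow_modEq hp hodd n s).mul_left _
        _ = b ^ p + (p : ℤ) ^ (n + 2) * ((b ^ (p - 1)) ^ 2 * t) := by
            rw [← hbs]; ring
        _ ≡ b ^ p + (p : ℤ) ^ (n + 2) * t [ZMOD (p : ℤ) ^ (n + 3)] := hfermat.add_left _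
        _ = y := by linear_combination -ht

theorem exists_modEq_pow_add_of_modEq_sq (hp : p.Prime) (hodd : Odd p) {k : ℕ} (hk : 2 ≤ k)
    {a x r : ℤ} (ha : IsCoprime a p) (h : x ≡ a ^ p + r [ZMOD (p : ℤ) ^ 2]) :
    ∃ b : ℤ, IsCoprime b p ∧ x ≡ b ^ p + r [ZMOD (p : ℤ) ^ k] := by
  obtain ⟨n, rfl⟩ := Nat.exists_eq_add_of_le' hk
  obtain ⟨b, hb, hby⟩ := exists_pow_modEq_of_pow_modEq_sq hp hodd ha (y := x - r)
    (by simpa using (h.sub_right r).symm) n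
  exact ⟨b, hb, by simpa using (hby.add_right r).symm⟩

theorem isCoprime_natCast_of_pos_of_lt (hp : p.Prime) {n : ℕ} (h0 : 0 < n) (hn : n < p) :
    IsCoprime (n : ℤ) p :=
  Nat.isCoprime_iff_coprime.mpr (Nat.coprime_of_lt_prime h0.ne' hn hp).symm

theorem exists_not_sq_dvd_add_one_pow_sub_pow_sub_one (hp : p.Prime) (hodd : Odd p) :
    ∃ n : ℕ, 0 < n ∧ n + 1 < p ∧ ¬ (p : ℤ) ^ 2 ∣ ((n : ℤ) + 1) ^ p - (n : ℤ) ^ p - 1 := by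
  by_contra! h
  have hsum : (p : ℤ) ^ 2 ∣ ∑ i ∈ range (p - 1), (((i : ℤ) + 1) ^ p - (i : ℤ) ^ p - 1) := by
    refine dvd_sum fun i hi => ?_
    rcases i.eq_zero_or_pos with rfl | hi0
    · simp [hp.ne_zero]
    · exact h i hi0 (by simp at hi; omega)
  have htel : ∑ i ∈ range (p - 1), (((i : ℤ) + 1) ^ p - (i : ℤ) ^ p - 1)
      = ((p : ℤ) - 1) ^ p - ((p : ℤ) - 1) := by
    have := sum_range_sub (fun i : ℕ => (i : ℤ) ^ p) (p - 1)
    push_cast at this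
    rw [sum_sub_distrib, this]
    simp [hp.ne_zero, Nat.cast_sub hp.one_le]
  have hneg : (p : ℤ) ^ 2 ∣ ((p : ℤ) - 1) ^ p + 1 := by
    simpa [hodd.neg_one_pow] using
      dvd_sub_pow_of_dvd_sub (p := p) (a := (p : ℤ) - 1) (b := -1) (by simp) 1
  have hdvd := dvd_sub hneg (htel ▸ hsum)
  rw [show ((p : ℤ) - 1) ^ p + 1 - (((p : ℤ) - 1) ^ p - ((p : ℤ) - 1)) = p by ring] at hdvd
  have := Int.le_of_dvd (by exact_mod_cast hp.pos) hdvd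
  have : (2 : ℤ) ≤ p := by exact_mod_cast hp.two_le
  nlinarith

theorem exists_pow_add_pow_add_pow_modEq_prime_mul (hp : p.Prime) (hodd : Odd p) {m : ℤ}
    (hm : IsCoprime m p) :
    ∃ a b c : ℤ, IsCoprime a p ∧ IsCoprime b p ∧ IsCoprime c p ∧
      a ^ p + b ^ p + c ^ p ≡ p * m [ZMOD (p : ℤ) ^ 2] := by
  obtain ⟨n, hn0, hnp, hg⟩ := exists_not_sq_dvd_add_one_pow_sub_pow_sub_one hp hodd
  have hn := isCoprime_natCast_of_pos_of_lt hp hn0 (by omega)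
  have hn1 : IsCoprime ((n : ℤ) + 1) p := by
    exact_mod_cast isCoprime_natCast_of_pos_of_lt hp n.succ_pos hnp
  obtain ⟨g, hg₁⟩ : (p : ℤ) ∣ ((n : ℤ) + 1) ^ p - (n : ℤ) ^ p - 1 := by
    have := dvd_sub (Int.prime_dvd_pow_self_sub hp ((n : ℤ) + 1)) (Int.prime_dvd_pow_self_sub hp n)
    rwa [show ((n : ℤ) + 1) ^ p - ((n : ℤ) + 1) - ((n : ℤ) ^ p - n)
      = ((n : ℤ) + 1) ^ p - (n : ℤ) ^ p - 1 by ring] at this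
  have hgp : IsCoprime g p := ((Nat.prime_iff_prime_int.mp hp).coprime_iff_not_dvd.mpr
    fun ⟨c, hc⟩ => hg ⟨c, by rw [hg₁, hc]; ring⟩).symm
  -- `u` inverts `g` modulo `p`, so scaling by `u * m` turns `p * g` into `p * m`
  obtain ⟨u, v, huv⟩ := hgp
  have ht : IsCoprime (u * m) p := IsCoprime.mul_left ⟨g, v, by linear_combination huv⟩ hm
  have hscale : (u * m) ^ p * p * g ≡ u * m * p * g [ZMOD (p : ℤ) ^ 2] := by
    have := ((Int.ModEq.pow_prime_eq_self hp (u * m)).mul_right' (c := (p : ℤ))).mul_right g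
    rwa [← sq] at this
  refine ⟨u * m * (n + 1), -(u * m * n), -(u * m), ht.mul_left hn1, (ht.mul_left hn).neg_left,
    ht.neg_left, ?_⟩
  calc (u * m * (n + 1)) ^ p + (-(u * m * n)) ^ p + (-(u * m)) ^ p
      = (u * m) ^ p * (((n : ℤ) + 1) ^ p - (n : ℤ) ^ p - 1) := by
        rw [hodd.neg_pow, hodd.neg_pow, mul_pow, mul_pow]; ring
    _ = (u * m) ^ p * p * g := by rw [hg₁]; ring
    _ ≡ u * m * p * g [ZMOD (p : ℤ) ^ 2] := hscale
    _ = p * m - (p : ℤ) ^ 2 * (v * m) := by linear_combination (p * m) * huv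
    _ ≡ p * m [ZMOD (p : ℤ) ^ 2] := Int.modEq_iff_dvd.mpr ⟨v * m, by ring⟩

theorem exists_sum_pow_modEq_sq (hp : p.Prime) (hodd : Odd p) (x : ℤ) :
    ∃ a b c d : ℤ, IsCoprime a p ∧ IsCoprime b p ∧ IsCoprime c p ∧ IsCoprime d p ∧
      (x ≡ a ^ p + b ^ p + c ^ p [ZMOD (p : ℤ) ^ 2] ∨
        x ≡ a ^ p + b ^ p + c ^ p + d ^ p [ZMOD (p : ℤ) ^ 2]) := by
  have hpZ := Nat.prime_iff_prime_int.mp hp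
  have h1 : IsCoprime (1 : ℤ) p := isCoprime_one_left
  have hneg1 : (-1 : ℤ) ^ p = -1 := hodd.neg_one_pow
  by_cases hx : (p : ℤ) ∣ x
  · obtain ⟨m, rfl⟩ := hx
    by_cases hm : (p : ℤ) ∣ m
    · obtain ⟨m', rfl⟩ := hm
      refine ⟨1, -1, 1, -1, h1, h1.neg_left, h1, h1.neg_left, Or.inr ?_⟩
      exact Int.modEq_iff_dvd.mpr ⟨-m', by rw [hneg1]; ring⟩
    · obtain ⟨a, b, c, ha, hb, hc, h⟩ :=
        exists_pow_add_pow_add_pow_modEq_prime_mul hp hodd (hpZ.coprime_iff_not_dvd.mpr hm).symm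
      exact ⟨a, b, c, 1, ha, hb, hc, h1, Or.inl h.symm⟩
  · have hxp : IsCoprime x p := (hpZ.coprime_iff_not_dvd.mpr hx).symm
    obtain ⟨m, hm⟩ := Int.prime_dvd_pow_self_sub hp x
    by_cases hm' : (p : ℤ) ∣ m
    · obtain ⟨m', rfl⟩ := hm'
      refine ⟨x, 1, -1, 1, hxp, h1, h1.neg_left, h1, Or.inl ?_⟩
      exact Int.modEq_iff_dvd.mpr ⟨m', by rw [hneg1]; linear_combination hm⟩
    · obtain ⟨a, b, c, ha, hb, hc, h⟩ := exists_pow_add_pow_add_pow_modEq_prime_mul hp hodd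
        (m := -m) (hpZ.coprime_iff_not_dvd.mpr fun h => hm' (dvd_neg.mp h)).symm
      refine ⟨x, a, b, c, hxp, ha, hb, hc, Or.inr ?_⟩
      calc x = x ^ p + p * -m := by linear_combination -hm
        _ ≡ x ^ p + (a ^ p + b ^ p + c ^ p) [ZMOD (p : ℤ) ^ 2] := h.symm.add_left _
        _ = x ^ p + a ^ p + b ^ p + c ^ p := by ring

theorem exists_sum_pow_modEq_prime_pow (hp : p.Prime) (hodd : Odd p) {k : ℕ} (hk : 2 ≤ k)
    (x : ℤ) :
    ∃ a b c d : ℤ, IsCoprime a p ∧ IsCoprime b p ∧ IsCoprime c p ∧ IsCoprime d p ∧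
      (x ≡ a ^ p + b ^ p + c ^ p [ZMOD (p : ℤ) ^ k] ∨
        x ≡ a ^ p + b ^ p + c ^ p + d ^ p [ZMOD (p : ℤ) ^ k]) := by
  obtain ⟨a, b, c, d, ha, hb, hc, hd, h | h⟩ := exists_sum_pow_modEq_sq hp hodd x
  · obtain ⟨a', ha', h'⟩ := exists_modEq_pow_add_of_modEq_sq hp hodd hk ha
      (by simpa only [add_assoc] using h)
    exact ⟨a', b, c, d, ha', hb, hc, hd, Or.inl (by simpa only [add_assoc] using h')⟩
  · obtain ⟨a', ha', h'⟩ := exists_modEq_pow_add_of_modEq_sq hp hodd hk ha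
      (by simpa only [add_assoc] using h)
    exact ⟨a', b, c, d, ha', hb, hc, hd, Or.inr (by simpa only [add_assoc] using h')⟩

theorem stmt_17 (p k : ℕ) (hp : p.Prime) (hodd : Odd p) (hk : 2 ≤ k)
    (x : ZMod (p ^ k)) :
    ∃ a b c d : ℤ, IsCoprime a (p : ℤ) ∧ IsCoprime b (p : ℤ) ∧
      IsCoprime c (p : ℤ) ∧ IsCoprime d (p : ℤ) ∧
      (x = (a : ZMod (p ^ k)) ^ p + (b : ZMod (p ^ k)) ^ p + (c : ZMod (p ^ k)) ^ p ∨
       x = (a : ZMod (p ^ k)) ^ p + (b : ZMod (p ^ k)) ^ p + (c : ZMod (p ^ k)) ^ p + (d : ZMod (p ^ k)) ^ p) := by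
  obtain ⟨X, rfl⟩ := ZMod.intCast_surjective x
  obtain ⟨a, b, c, d, ha, hb, hc, hd, h⟩ := exists_sum_pow_modEq_prime_pow hp hodd hk X
  refine ⟨a, b, c, d, ha, hb, hc, hd, ?_⟩
  simpa only [← Int.cast_pow, ← Int.cast_add, ZMod.intCast_eq_intCast_iff, Nat.cast_pow] using h
end
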